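/- Let A be a bicomplete abelian category (having all small limits and colimits), and let (𝒳, 𝒴) be a cotorsion pair of chain complexes over A, meaning 𝒳 = { X : Ext^1(X,Y) = 0 for all Y ∈ 𝒴 } and 𝒴 = { Y : Ext^1(X,Y) = 0 for all X ∈ 𝒳 }, where Ext^1 is computed in the abelian category Ch(A) of chain complexes over A. Let 𝒞 be a class of objects of A. If the sphere complexes S^n(C) lie in 𝒳 for every integer n and every C ∈ 𝒞, then every bounded below chain complex all of whose components lie in 𝒞 is also in 𝒳. -/

import Mathlib

/-!
STATEMENT 4: Let `A` be a bicomplete abelian category and `(𝒳, 𝒴)` a cotorsion pair in the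
category of `ℤ`-indexed chain complexes over `A` (each class is the `Ext¹`-orthogonal of the
other, `Ext¹` computed in `Ch(A)`).  Let `𝒞` be a class of objects of `A`.  If `S^n C ∈ 𝒳`
for all `n : ℤ` and `C ∈ 𝒞`, then every bounded below complex with components in `𝒞` is in `𝒳`.

The vanishing of the (Yoneda) group `Ext¹(A, B)` is expressed by the (equivalent)
statement that every short exact sequence `0 → B → E → A → 0` splits.
-/

universe v u

open CategoryTheory Limits

/-- Vanishing of (Yoneda) `Ext¹(A, B)` in an abelian category: every short exact
sequence `0 → B → E → A → 0` splits. -/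
def Ext1Vanishes {C : Type*} [Category C] [Abelian C] (A B : C) : Prop :=
  ∀ (E : C) (f : B ⟶ E) (g : E ⟶ A) (w : f ≫ g = 0),
    (ShortComplex.mk f g w).ShortExact → ∃ s : A ⟶ E, s ≫ g = 𝟙 A

variable (A : Type u) [Category.{v} A] [Abelian A]

/-- The sphere complex `S^n C`: `C` concentrated in degree `n`. -/
noncomputable def sphere (n : ℤ) (C : A) : ChainComplex A ℤ :=
  (HomologicalComplex.single A (ComplexShape.down ℤ) n).obj C

/-!
A short exact sequence `0 → L → E → X → 0` of complexes with `L ∈ 𝒴` is split by constructing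
sections `sₙ : Xₙ → Eₙ` of `g` commuting with the differentials, by induction upwards from the
degree below which `X` vanishes. Given `sₙ₋₁`, let `r` be the retraction of `fₙ₋₁` it determines.
Replacing `Lₙ` by `Eₙ` in `L`, with `d ≫ r` as the differential out of degree `n`, gives an
extension of the sphere `Sⁿ(Xₙ)` by `L`. It splits because `Sⁿ(Xₙ) ∈ 𝒳`, and the degree `n`
component of the splitting is a section `sₙ` of `gₙ` killed by `d ≫ r`, which says exactly that
`sₙ ≫ d = d ≫ sₙ₋₁`.
-/

namespace Int

section StepSeq

variable {T : ℤ → Type*} (P : ∀ n, T n → Prop) (R : ∀ n, T n → T (n - 1) → Prop) (N : ℤ)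
  (base : ∀ n < N, ∃ t, P n t ∧ ∀ t', R n t t')
  (step : ∀ n t, P (n - 1) t → ∃ t', P n t' ∧ R n t' t)

noncomputable def stepSeq (n : ℤ) : {t : T n // P n t} :=
  if h : n < N then ⟨(base n h).choose, (base n h).choose_spec.1⟩
  else
    ⟨(step n (stepSeq (n - 1)).1 (stepSeq (n - 1)).2).choose,
      (step n (stepSeq (n - 1)).1 (stepSeq (n - 1)).2).choose_spec.1⟩
termination_by (n + 1 - N).toNat
decreasing_by omega

theorem stepSeq_rel (n : ℤ) :
    R n (stepSeq P R N base step n).1 (stepSeq P R N base step (n - 1)).1 := by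
  by_cases h : n < N
  · rw [stepSeq, dif_pos h]
    exact (base n h).choose_spec.2 _
  · rw [stepSeq, dif_neg h]
    exact (step n _ (stepSeq P R N base step (n - 1)).2).choose_spec.2

end StepSeq

end Int

open HomologicalComplex

namespace ChainComplex

variable {A}

section ReplaceAt

variable (L : ChainComplex A ℤ) (n : ℤ) (M : A)

def replaceX (k : ℤ) : A := if k = n then M else L.X k

lemma replaceX_of_eq {k : ℤ} (hk : k = n) : replaceX L n M k = M := if_pos hk

lemma replaceX_of_ne {k : ℤ} (hk : k ≠ n) : replaceX L n M k = L.X k := if_neg hk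

variable {L n M} (φ : L.X n ⟶ M) (dOut : M ⟶ L.X (n - 1))

noncomputable def replaceD (i j : ℤ) : replaceX L n M i ⟶ replaceX L n M j :=
  if hij : j + 1 = i then
    if hi : i = n then
      eqToHom (replaceX_of_eq L n M hi) ≫ dOut ≫
        eqToHom ((congrArg L.X (by omega : n - 1 = j)).trans
          (replaceX_of_ne L n M (by omega : j ≠ n)).symm)
    else if hj : j = n then
      eqToHom (replaceX_of_ne L n M hi) ≫ L.d i n ≫ φ ≫ eqToHom (replaceX_of_eq L n M hj).symm
    else
      eqToHom (replaceX_of_ne L n M hi) ≫ L.d i j ≫ eqToHom (replaceX_of_ne L n M hj).symm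
  else 0

variable (hφ : φ ≫ dOut = L.d n (n - 1)) (hdOut : dOut ≫ L.d (n - 1) (n - 1 - 1) = 0)

/-- `L` with `L.X n` replaced by `M`; the differentials into and out of degree `n` are
`L.d _ n ≫ φ` and `dOut`. -/
@[reducible]
noncomputable def replaceAt : ChainComplex A ℤ where
  X := replaceX L n M
  d := replaceD φ dOut
  shape i j hij := dif_neg (by simpa using hij)
  d_comp_d' i j k hij hjk := by
    simp only [ComplexShape.down_Rel] at hij hjk
    rw [replaceD, dif_pos hij, replaceD, dif_pos hjk]
    by_cases hi : i = n
    · subst hi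
      obtain rfl : j = i - 1 := by omega
      obtain rfl : k = i - 1 - 1 := by omega
      rw [dif_pos rfl, dif_neg (show i - 1 ≠ i by omega), dif_neg (show i - 1 - 1 ≠ i by omega)]
      simp [reassoc_of% hdOut]
    by_cases hj : j = n
    · subst hj
      obtain rfl : k = j - 1 := by omega
      rw [dif_neg hi, dif_pos rfl, dif_pos rfl]
      simp [reassoc_of% hφ]
    by_cases hk : k = n
    · subst hk
      rw [dif_neg hi, dif_neg hj, dif_neg hj, dif_pos rfl]
      simp
    · rw [dif_neg hi, dif_neg hj, dif_neg hj, dif_neg hk]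
      simp

noncomputable def toReplaceAt : L ⟶ replaceAt φ dOut hφ hdOut where
  f k :=
    if hk : k = n then eqToHom (congrArg L.X hk) ≫ φ ≫ eqToHom (replaceX_of_eq L n M hk).symm
    else eqToHom (replaceX_of_ne L n M hk).symm
  comm' i j hij := by
    simp only [ComplexShape.down_Rel] at hij
    change _ ≫ replaceD φ dOut i j = _
    rw [replaceD, dif_pos hij]
    by_cases hi : i = n
    · subst hi
      obtain rfl : j = i - 1 := by omega
      rw [dif_pos rfl, dif_pos rfl, dif_neg (show i - 1 ≠ i by omega)]
      simp [reassoc_of% hφ]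
    by_cases hj : j = n
    · subst hj
      rw [dif_neg hi, dif_pos rfl, dif_neg hi, dif_pos rfl]
      simp
    · rw [dif_neg hi, dif_neg hj, dif_neg hi, dif_neg hj]
      simp

variable {C : A} (ψ : M ⟶ C) (hφψ : φ ≫ ψ = 0)

noncomputable def replaceAtToSingle :
    replaceAt φ dOut hφ hdOut ⟶ (single A (ComplexShape.down ℤ) n).obj C where
  f k :=
    if hk : k = n then
      eqToHom (replaceX_of_eq L n M hk) ≫ ψ ≫
        (singleObjXIsoOfEq (ComplexShape.down ℤ) n C k hk).inv
    else 0
  comm' i j hij := by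
    simp only [ComplexShape.down_Rel] at hij
    symm
    change replaceD φ dOut i j ≫ _ = _
    rw [single_obj_d, comp_zero, replaceD, dif_pos hij]
    by_cases hj : j = n
    · subst hj
      rw [dif_neg (show i ≠ j by omega), dif_pos rfl, dif_pos rfl]
      simp [reassoc_of% hφψ]
    · rw [dif_neg hj]
      split_ifs <;> simp

lemma replaceAt_d_self : (replaceAt φ dOut hφ hdOut).d n (n - 1) =
    eqToHom (replaceX_of_eq L n M rfl) ≫ dOut ≫ eqToHom (replaceX_of_ne L n M (by omega)).symm := by
  simp [replaceD]

lemma replaceAtToSingle_f_self : (replaceAtToSingle φ dOut hφ hdOut ψ hφψ).f n =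
    eqToHom (replaceX_of_eq L n M rfl) ≫ ψ ≫ (singleObjXSelf (ComplexShape.down ℤ) n C).inv :=
  dif_pos rfl

lemma toReplaceAt_comp_replaceAtToSingle :
    toReplaceAt φ dOut hφ hdOut ≫ replaceAtToSingle φ dOut hφ hdOut ψ hφψ = 0 := by
  ext
  simp [toReplaceAt, replaceAtToSingle, reassoc_of% hφψ]

lemma shortExact_replaceAt (hS : (ShortComplex.mk φ ψ hφψ).ShortExact) :
    (ShortComplex.mk _ _
      (toReplaceAt_comp_replaceAtToSingle φ dOut hφ hdOut ψ hφψ)).ShortExact := by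
  refine shortExact_of_degreewise_shortExact _ fun k => ?_
  change (ShortComplex.mk ((toReplaceAt φ dOut hφ hdOut).f k)
    ((replaceAtToSingle φ dOut hφ hdOut ψ hφψ).f k) _).ShortExact
  by_cases hk : k = n
  · subst hk
    refine ShortComplex.shortExact_of_iso (S₁ := ShortComplex.mk φ ψ hφψ)
      (ShortComplex.isoMk (Iso.refl _) (eqToIso (replaceX_of_eq L k M rfl).symm)
        (singleObjXIsoOfEq (ComplexShape.down ℤ) k C k rfl).symm ?_ ?_) hS
    · simp [toReplaceAt]
    · simp [replaceAtToSingle]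
  · exact ShortComplex.Splitting.shortExact
      { r := eqToHom (replaceX_of_ne L n M hk)
        s := 0
        f_r := by simp [toReplaceAt, hk]
        s_g := (isZero_single_obj_X (ComplexShape.down ℤ) n C k hk).eq_of_src _ _
        id := by simp [toReplaceAt, hk] }

end ReplaceAt

theorem exists_section_comp_eq_zero_of_ext1Vanishes_sphere {L : ChainComplex A ℤ} {n : ℤ}
    {C M : A} (hL : Ext1Vanishes (sphere A n C) L) {φ : L.X n ⟶ M} {ψ : M ⟶ C}
    {hφψ : φ ≫ ψ = 0} (hS : (ShortComplex.mk φ ψ hφψ).ShortExact) (dOut : M ⟶ L.X (n - 1))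
    (hφ : φ ≫ dOut = L.d n (n - 1)) (hdOut : dOut ≫ L.d (n - 1) (n - 1 - 1) = 0) :
    ∃ s : C ⟶ M, s ≫ ψ = 𝟙 C ∧ s ≫ dOut = 0 := by
  change Ext1Vanishes ((single A (ComplexShape.down ℤ) n).obj C) L at hL
  obtain ⟨σ, hσ⟩ := hL _ _ _ _ (shortExact_replaceAt φ dOut hφ hdOut ψ hφψ hS)
  have hσn : σ.f n ≫ (replaceAtToSingle φ dOut hφ hdOut ψ hφψ).f n = 𝟙 _ := by
    rw [← comp_f, hσ, id_f]
  have hσd : σ.f n ≫ (replaceAt φ dOut hφ hdOut).d n (n - 1) = 0 := by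
    rw [σ.comm, single_obj_d, zero_comp]
  rw [replaceAtToSingle_f_self] at hσn
  rw [replaceAt_d_self] at hσd
  let e := singleObjXSelf (ComplexShape.down ℤ) n C
  refine ⟨e.inv ≫ σ.f n ≫ eqToHom (replaceX_of_eq L n M rfl), ?_, ?_⟩
  · simpa using e.inv ≫= hσn =≫ e.hom
  · simpa using e.inv ≫= hσd =≫ eqToHom (replaceX_of_ne L n M (by omega))

theorem exists_section_extend {L E X : ChainComplex A ℤ} {f : L ⟶ E} {g : E ⟶ X} {w : f ≫ g = 0}
    (hS : (ShortComplex.mk f g w).ShortExact) {n : ℤ} (hL : Ext1Vanishes (sphere A n (X.X n)) L)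
    (s : X.X (n - 1) ⟶ E.X (n - 1)) (hs : s ≫ g.f (n - 1) = 𝟙 _)
    (hsd : X.d n (n - 1) ≫ s ≫ E.d (n - 1) (n - 1 - 1) = 0) :
    ∃ t : X.X n ⟶ E.X n, t ≫ g.f n = 𝟙 _ ∧ t ≫ E.d n (n - 1) = X.d n (n - 1) ≫ s := by
  have hSk (k : ℤ) : (ShortComplex.mk (f.f k) (g.f k) (by rw [← comp_f, w, zero_f])).ShortExact :=
    (shortExact_iff_degreewise_shortExact _).1 hS k
  have : Mono (f.f (n - 1 - 1)) := (hSk _).mono_f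
  let split := ShortComplex.Splitting.ofExactOfSection _ (hSk (n - 1)).exact s hs (hSk _).mono_f
  have hf_r : f.f (n - 1) ≫ split.r = 𝟙 _ := split.f_r
  have hr_f : split.r ≫ f.f (n - 1) = 𝟙 _ - g.f (n - 1) ≫ s := split.r_f
  have hid : split.r ≫ f.f (n - 1) + g.f (n - 1) ≫ s = 𝟙 _ := split.id
  have hφ : f.f n ≫ E.d n (n - 1) ≫ split.r = L.d n (n - 1) := by
    rw [f.comm_assoc, hf_r, Category.comp_id]
  have hdOut : (E.d n (n - 1) ≫ split.r) ≫ L.d (n - 1) (n - 1 - 1) = 0 := by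
    rw [← cancel_mono (f.f (n - 1 - 1)), Category.assoc, Category.assoc, ← f.comm,
      reassoc_of% hr_f]
    simp [← g.comm_assoc, hsd]
  obtain ⟨t, ht, htd⟩ :=
    exists_section_comp_eq_zero_of_ext1Vanishes_sphere hL (hSk n) _ hφ hdOut
  refine ⟨t, ht, ?_⟩
  have hsplit : t ≫ E.d n (n - 1) ≫ g.f (n - 1) ≫ s = t ≫ E.d n (n - 1) := by
    simpa [reassoc_of% htd] using t ≫= E.d n (n - 1) ≫= hid
  rw [← hsplit, ← g.comm_assoc, reassoc_of% ht]

theorem ext1Vanishes_of_bddBelow {X L : ChainComplex A ℤ}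
    (hX : ∃ N : ℤ, ∀ n < N, IsZero (X.X n)) (hL : ∀ n, Ext1Vanishes (sphere A n (X.X n)) L) :
    Ext1Vanishes X L := by
  obtain ⟨N, hN⟩ := hX
  intro E f g w hS
  -- The second condition is what `exists_section_extend` needs in the next degree.
  let P (n : ℤ) (t : X.X n ⟶ E.X n) : Prop :=
    t ≫ g.f n = 𝟙 _ ∧ ∀ i, X.d i n ≫ t ≫ E.d n (n - 1) = 0
  let R (n : ℤ) (t : X.X n ⟶ E.X n) (t' : X.X (n - 1) ⟶ E.X (n - 1)) : Prop :=
    t ≫ E.d n (n - 1) = X.d n (n - 1) ≫ t'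
  have base (n : ℤ) (hn : n < N) : ∃ t, P n t ∧ ∀ t', R n t t' :=
    ⟨0, ⟨(hN n hn).eq_of_src _ _, by simp⟩, fun _ => (hN n hn).eq_of_src _ _⟩
  have step (n : ℤ) (u) (hu : P (n - 1) u) : ∃ t, P n t ∧ R n t u := by
    obtain ⟨t, ht, htd⟩ := exists_section_extend hS (hL n) u hu.1 (hu.2 n)
    exact ⟨t, ⟨ht, fun i => by rw [htd, X.d_comp_d_assoc, zero_comp]⟩, htd⟩
  let s := Int.stepSeq P R N base step
  refine ⟨{ f := fun n => (s n).1, comm' := fun i j hij => ?_ }, ?_⟩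
  · obtain rfl : j = i - 1 := by simp only [ComplexShape.down_Rel] at hij; omega
    exact Int.stepSeq_rel P R N base step i
  · ext n
    exact (s n).2.1

end ChainComplex

theorem cotorsionPair_bddBelow_of_spheres
    (𝒳 𝒴 : Set (ChainComplex A ℤ))
    (h𝒳 : ∀ K, K ∈ 𝒳 ↔ ∀ L ∈ 𝒴, Ext1Vanishes K L)
    (𝒞 : Set A)
    (hS : ∀ (n : ℤ) (C : A), C ∈ 𝒞 → sphere A n C ∈ 𝒳)
    (X : ChainComplex A ℤ) (hbdd : ∃ N : ℤ, ∀ n < N, IsZero (X.X n))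
    (hcomp : ∀ n, X.X n ∈ 𝒞) :
    X ∈ 𝒳 :=
  (h𝒳 X).2 fun L hL => ChainComplex.ext1Vanishes_of_bddBelow hbdd fun n =>
    (h𝒳 _).1 (hS n _ (hcomp n)) L hL
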